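/- Let M and M* be matchings with |M*| = |M| + 1. Then there exists a maximal chain C of M (possibly an empty chain) such that Aug(C) ⊆ M* and |Aug(C)| = |C| + 1. -/
import Mathlib


/-- A matching in the line graph with edges `e_1, …, e_s`: a subset of `{1, …, s}`
containing no two consecutive integers. -/
def IsMatching (s : ℕ) (M : Finset ℕ) : Prop :=
  M ⊆ Finset.Icc 1 s ∧ ∀ i ∈ M, i + 1 ∉ M

/-- The chain `{i, i+2, …, i+2(t-1)}` with `t` elements (empty when `t = 0`). -/
def chainSet (i t : ℕ) : Finset ℕ :=
  (Finset.range t).image (fun j => i + 2 * j)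

/-- The augmentation of the chain `chainSet i t`: for `t ≥ 1` it is
`{i-1, i+1, i+3, …, i+2(t-1)+1} ∩ {1, …, s}`; for the `i`-th empty chain (`t = 0`)
it is `{i}`. -/
def augSet (s i t : ℕ) : Finset ℕ :=
  if t = 0 then {i}
  else ((Finset.range (t + 1)).image (fun j => i - 1 + 2 * j)) ∩ Finset.Icc 1 s

/-- `chainSet i t` is a maximal chain of `M` (for `t = 0`, the `i`-th empty chain). -/
def IsMaximalChain (s : ℕ) (M : Finset ℕ) (i t : ℕ) : Prop :=
  if t = 0 then
    i ∈ Finset.Icc 1 s ∧ (i - 1) ∉ M ∧ i ∉ M ∧ (i + 1) ∉ M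
  else
    chainSet i t ⊆ M ∧ (i - 2) ∉ M ∧ (i + 2 * t) ∉ M

lemma card_chainSet (i t : ℕ) : (chainSet i t).card = t := by
  rw [chainSet, Finset.card_image_of_injective _ (fun a b h => by omega), Finset.card_range]

lemma mem_chainSet {x i t : ℕ} : x ∈ chainSet i t ↔ ∃ j, j < t ∧ x = i + 2 * j := by
  simp only [chainSet, Finset.mem_image, Finset.mem_range]
  constructor
  · rintro ⟨j, hj, rfl⟩; exact ⟨j, hj, rfl⟩
  · rintro ⟨j, hj, rfl⟩; exact ⟨j, hj, rfl⟩

lemma augSet_eq {s i t : ℕ} (ht : t ≠ 0) (hi : 2 ≤ i) (hs : i - 1 + 2 * t ≤ s) :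
    augSet s i t = (Finset.range (t + 1)).image (fun j => i - 1 + 2 * j) := by
  rw [augSet, if_neg ht, Finset.inter_eq_left]
  intro x hx
  simp only [Finset.mem_image, Finset.mem_range] at hx
  obtain ⟨j, hj, rfl⟩ := hx
  simp only [Finset.mem_Icc]
  omega

lemma card_augSet {s i t : ℕ} (ht : t ≠ 0) (hi : 2 ≤ i) (hs : i - 1 + 2 * t ≤ s) :
    (augSet s i t).card = t + 1 := by
  rw [augSet_eq ht hi hs, Finset.card_image_of_injective _ (fun a b h => by omega),
    Finset.card_range]

lemma mem_augSet_of {s i t j : ℕ} (ht : t ≠ 0) (hi : 2 ≤ i) (hs : i - 1 + 2 * t ≤ s)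
    (hj : j ≤ t) : i - 1 + 2 * j ∈ augSet s i t := by
  rw [augSet_eq ht hi hs]
  simp only [Finset.mem_image, Finset.mem_range]
  exact ⟨j, by omega, rfl⟩

lemma exists_of_mem_augSet {s i t x : ℕ} (ht : t ≠ 0) (hx : x ∈ augSet s i t) :
    ∃ j, j ≤ t ∧ x = i - 1 + 2 * j := by
  rw [augSet, if_neg ht] at hx
  have := Finset.mem_of_mem_inter_left hx
  simp only [Finset.mem_image, Finset.mem_range] at this
  obtain ⟨j, hj, rfl⟩ := this
  exact ⟨j, by omega, rfl⟩

lemma augSet_bounds {s i t : ℕ} (ht : t ≠ 0) (h : (augSet s i t).card = t + 1) :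
    2 ≤ i ∧ i - 1 + 2 * t ≤ s := by
  rw [augSet, if_neg ht] at h
  set img := (Finset.range (t + 1)).image (fun j => i - 1 + 2 * j) with himg
  have h1 : img.card ≤ t + 1 := le_trans Finset.card_image_le (by simp)
  have h2 : img ∩ Finset.Icc 1 s ⊆ img := Finset.inter_subset_left
  have h3 : img ∩ Finset.Icc 1 s = img :=
    Finset.eq_of_subset_of_card_le h2 (by omega)
  have h4 : img ⊆ Finset.Icc 1 s := by
    rw [← h3]; exact Finset.inter_subset_right
  have h5 : i - 1 ∈ img := by
    simp only [himg, Finset.mem_image, Finset.mem_range]; exact ⟨0, by omega, by omega⟩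
  have h6 : i - 1 + 2 * t ∈ img := by
    simp only [himg, Finset.mem_image, Finset.mem_range]; exact ⟨t, by omega, rfl⟩
  have h7 := Finset.mem_Icc.mp (h4 h5)
  have h8 := Finset.mem_Icc.mp (h4 h6)
  omega

lemma build0 {s i : ℕ} {M Mstar : Finset ℕ} (h1 : 1 ≤ i) (h2 : i ≤ s) (h3 : i - 1 ∉ M)
    (h4 : i ∉ M) (h5 : i + 1 ∉ M) (h6 : i ∈ Mstar) :
    IsMaximalChain s M i 0 ∧ augSet s i 0 ⊆ Mstar ∧
      (augSet s i 0).card = (chainSet i 0).card + 1 := by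
  refine ⟨?_, ?_, ?_⟩
  · rw [IsMaximalChain, if_pos rfl]
    exact ⟨Finset.mem_Icc.mpr ⟨h1, h2⟩, h3, h4, h5⟩
  · rw [augSet, if_pos rfl, Finset.singleton_subset_iff]; exact h6
  · rw [augSet, if_pos rfl, card_chainSet]; simp

lemma destruct0 {s i : ℕ} {M Mstar : Finset ℕ} (hmc : IsMaximalChain s M i 0)
    (hsub : augSet s i 0 ⊆ Mstar) :
    1 ≤ i ∧ i ≤ s ∧ i - 1 ∉ M ∧ i ∉ M ∧ i + 1 ∉ M ∧ i ∈ Mstar := by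
  rw [IsMaximalChain, if_pos rfl] at hmc
  obtain ⟨h1, h3, h4, h5⟩ := hmc
  have h2 := Finset.mem_Icc.mp h1
  have h6 : i ∈ Mstar := hsub (by rw [augSet, if_pos rfl]; simp)
  exact ⟨h2.1, h2.2, h3, h4, h5, h6⟩

lemma buildS {s i t : ℕ} {M Mstar : Finset ℕ} (ht : t ≠ 0) (hi : 2 ≤ i)
    (hs : i - 1 + 2 * t ≤ s) (hc : ∀ j, j < t → i + 2 * j ∈ M) (h2 : i - 2 ∉ M)
    (h3 : i + 2 * t ∉ M) (hstar : ∀ j, j ≤ t → i - 1 + 2 * j ∈ Mstar) :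
    IsMaximalChain s M i t ∧ augSet s i t ⊆ Mstar ∧
      (augSet s i t).card = (chainSet i t).card + 1 := by
  refine ⟨?_, ?_, ?_⟩
  · rw [IsMaximalChain, if_neg ht]
    refine ⟨?_, h2, h3⟩
    intro x hx
    obtain ⟨j, hj, rfl⟩ := mem_chainSet.mp hx
    exact hc j hj
  · intro x hx
    obtain ⟨j, hj, rfl⟩ := exists_of_mem_augSet ht hx
    exact hstar j hj
  · rw [card_augSet ht hi hs, card_chainSet]

lemma destructS {s i t : ℕ} {M Mstar : Finset ℕ} (ht : t ≠ 0) (hmc : IsMaximalChain s M i t)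
    (hsub : augSet s i t ⊆ Mstar)
    (hcard : (augSet s i t).card = (chainSet i t).card + 1) :
    2 ≤ i ∧ i - 1 + 2 * t ≤ s ∧ (∀ j, j < t → i + 2 * j ∈ M) ∧ i - 2 ∉ M ∧ i + 2 * t ∉ M ∧
      (∀ j, j ≤ t → i - 1 + 2 * j ∈ Mstar) := by
  rw [card_chainSet] at hcard
  obtain ⟨hi, hs⟩ := augSet_bounds ht hcard
  rw [IsMaximalChain, if_neg ht] at hmc
  obtain ⟨hc, h2, h3⟩ := hmc
  exact ⟨hi, hs, fun j hj => hc (mem_chainSet.mpr ⟨j, hj, rfl⟩), h2, h3,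
    fun j hj => hsub (mem_augSet_of ht hi hs hj)⟩

lemma key (s : ℕ) : ∀ M Mstar : Finset ℕ, IsMatching s M → IsMatching s Mstar →
    M.card + 1 ≤ Mstar.card →
    ∃ i t, IsMaximalChain s M i t ∧ augSet s i t ⊆ Mstar ∧
      (augSet s i t).card = (chainSet i t).card + 1 := by
  induction s using Nat.strong_induction_on with
  | _ s IH =>
  intro M Mstar hM hMstar hcard
  have hMs : M ⊆ Finset.Icc 1 s := hM.1
  have hMstars : Mstar ⊆ Finset.Icc 1 s := hMstar.1
  rcases Nat.eq_zero_or_pos s with rfl | hs1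
  · have := Finset.card_le_card hMstars
    rw [Nat.card_Icc] at this
    omega
  by_cases hsM : s ∈ M
  · -- Case s ∈ M : pass to s-2 with M' = M.erase s, Mstar' = Mstar ∩ Icc 1 (s-2)
    have hs2 : 2 ≤ s := by
      by_contra h
      have h1 : Mstar.card ≤ s := by
        have := Finset.card_le_card hMstars
        rwa [Nat.card_Icc, Nat.add_sub_cancel] at this
      have h2 : 0 < M.card := Finset.card_pos.mpr ⟨s, hsM⟩
      omega
    have hsm1 : s - 1 ∉ M := fun h => hM.2 (s - 1) h (by rwa [Nat.sub_add_cancel (by omega)])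
    have hM'sub : M.erase s ⊆ Finset.Icc 1 (s - 2) := by
      intro x hx
      have hxM := Finset.mem_of_mem_erase hx
      have hxs := Finset.ne_of_mem_erase hx
      have hx2 := Finset.mem_Icc.mp (hMs hxM)
      have hx1 : x ≠ s - 1 := fun h => hsm1 (h ▸ hxM)
      rw [Finset.mem_Icc]; omega
    have hM'match : IsMatching (s - 2) (M.erase s) :=
      ⟨hM'sub, fun i hi h => hM.2 i (Finset.mem_of_mem_erase hi) (Finset.mem_of_mem_erase h)⟩
    have hMstar'match : IsMatching (s - 2) (Mstar ∩ Finset.Icc 1 (s - 2)) :=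
      ⟨Finset.inter_subset_right,
       fun i hi h => hMstar.2 i (Finset.mem_inter.mp hi).1 (Finset.mem_inter.mp h).1⟩
    have hdrop : (Mstar \ Finset.Icc 1 (s - 2)).card ≤ 1 := by
      rw [Finset.card_le_one]
      intro a ha b hb
      rw [Finset.mem_sdiff, Finset.mem_Icc] at ha hb
      have ha2 := Finset.mem_Icc.mp (hMstars ha.1)
      have hb2 := Finset.mem_Icc.mp (hMstars hb.1)
      by_contra hne
      have hboth : s - 1 ∈ Mstar ∧ s ∈ Mstar := by
        rcases (by omega : a = s - 1 ∧ b = s ∨ a = s ∧ b = s - 1) with ⟨h1, h2⟩ | ⟨h1, h2⟩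
        · exact ⟨h1 ▸ ha.1, h2 ▸ hb.1⟩
        · exact ⟨h2 ▸ hb.1, h1 ▸ ha.1⟩
      exact hMstar.2 (s - 1) hboth.1 (by rw [Nat.sub_add_cancel (by omega)]; exact hboth.2)
    have hcards : (M.erase s).card + 1 ≤ (Mstar ∩ Finset.Icc 1 (s - 2)).card := by
      have h1 : (M.erase s).card = M.card - 1 := Finset.card_erase_of_mem hsM
      have h2 : (Mstar ∩ Finset.Icc 1 (s - 2)).card + (Mstar \ Finset.Icc 1 (s - 2)).card
          = Mstar.card := Finset.card_inter_add_card_sdiff Mstar (Finset.Icc 1 (s - 2))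
      have h3 : 0 < M.card := Finset.card_pos.mpr ⟨s, hsM⟩
      omega
    obtain ⟨i, t, hmc, hsub, hc⟩ :=
      IH (s - 2) (by omega) _ _ hM'match hMstar'match hcards
    rcases Nat.eq_zero_or_pos t with rfl | ht0
    · obtain ⟨h1, h2, h3, h4, h5, h6⟩ := destruct0 hmc hsub
      refine ⟨i, 0, build0 h1 (by omega) ?_ ?_ ?_ ((Finset.mem_inter.mp h6).1)⟩
      · exact fun h => h3 (Finset.mem_erase.mpr ⟨by omega, h⟩)
      · exact fun h => h4 (Finset.mem_erase.mpr ⟨by omega, h⟩)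
      · exact fun h => h5 (Finset.mem_erase.mpr ⟨by omega, h⟩)
    · have ht : t ≠ 0 := by omega
      obtain ⟨hi, hsb, hch, h2, h3, hstar⟩ := destructS ht hmc hsub hc
      refine ⟨i, t, buildS ht hi (by omega) ?_ ?_ ?_ ?_⟩
      · exact fun j hj => Finset.mem_of_mem_erase (hch j hj)
      · exact fun h => h2 (Finset.mem_erase.mpr ⟨by omega, h⟩)
      · exact fun h => h3 (Finset.mem_erase.mpr ⟨by omega, h⟩)
      · exact fun j hj => (Finset.mem_inter.mp (hstar j hj)).1
  · -- Case s ∉ M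
    by_cases hsMs : s ∈ Mstar
    · by_cases hpm : s - 1 ∈ M
      · -- alternating at the top: pass to s-2 with M.erase (s-1), Mstar.erase s
        have hs2 : 2 ≤ s := by
          have := Finset.mem_Icc.mp (hMs hpm); omega
        have hsm1star : s - 1 ∉ Mstar := fun h =>
          hMstar.2 (s - 1) h (by rw [Nat.sub_add_cancel (by omega)]; exact hsMs)
        have hM'sub : M.erase (s - 1) ⊆ Finset.Icc 1 (s - 2) := by
          intro x hx
          have hxM := Finset.mem_of_mem_erase hx
          have hxs := Finset.ne_of_mem_erase hx
          have hx2 := Finset.mem_Icc.mp (hMs hxM)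
          have hx1 : x ≠ s := fun h => hsM (h ▸ hxM)
          rw [Finset.mem_Icc]; omega
        have hMstar'sub : Mstar.erase s ⊆ Finset.Icc 1 (s - 2) := by
          intro x hx
          have hxM := Finset.mem_of_mem_erase hx
          have hxs := Finset.ne_of_mem_erase hx
          have hx2 := Finset.mem_Icc.mp (hMstars hxM)
          have hx1 : x ≠ s - 1 := fun h => hsm1star (h ▸ hxM)
          rw [Finset.mem_Icc]; omega
        have hM'match : IsMatching (s - 2) (M.erase (s - 1)) :=
          ⟨hM'sub, fun i hi h => hM.2 i (Finset.mem_of_mem_erase hi) (Finset.mem_of_mem_erase h)⟩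
        have hMstar'match : IsMatching (s - 2) (Mstar.erase s) :=
          ⟨hMstar'sub,
           fun i hi h => hMstar.2 i (Finset.mem_of_mem_erase hi) (Finset.mem_of_mem_erase h)⟩
        have hcards : (M.erase (s - 1)).card + 1 ≤ (Mstar.erase s).card := by
          have h1 : (M.erase (s - 1)).card = M.card - 1 := Finset.card_erase_of_mem hpm
          have h2 : (Mstar.erase s).card = Mstar.card - 1 := Finset.card_erase_of_mem hsMs
          have h3 : 0 < M.card := Finset.card_pos.mpr ⟨s - 1, hpm⟩
          omega
        obtain ⟨i, t, hmc, hsub, hc⟩ :=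
          IH (s - 2) (by omega) _ _ hM'match hMstar'match hcards
        rcases Nat.eq_zero_or_pos t with rfl | ht0
        · obtain ⟨h1, h2, h3, h4, h5, h6⟩ := destruct0 hmc hsub
          have h6' : i ∈ Mstar := Finset.mem_of_mem_erase h6
          by_cases hie : i + 1 = s - 1
          · -- extend to the chain {s-1}
            refine ⟨s - 1, 1, buildS one_ne_zero (by omega) (by omega) ?_ ?_ ?_ ?_⟩
            · intro j hj
              have hj0 : j = 0 := by omega
              subst hj0
              simpa using hpm
            · intro h
              have he : s - 1 - 2 = i - 1 := by omega
              rw [he] at h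
              exact h3 (Finset.mem_erase.mpr ⟨by omega, h⟩)
            · intro h
              have := Finset.mem_Icc.mp (hMs h); omega
            · intro j hj
              interval_cases j
              · have he : s - 1 - 1 + 2 * 0 = i := by omega
                rw [he]; exact h6'
              · have he : s - 1 - 1 + 2 * 1 = s := by omega
                rw [he]; exact hsMs
          · refine ⟨i, 0, build0 h1 (by omega) ?_ ?_ ?_ h6'⟩
            · exact fun h => h3 (Finset.mem_erase.mpr ⟨by omega, h⟩)
            · exact fun h => h4 (Finset.mem_erase.mpr ⟨by omega, h⟩)
            · exact fun h => h5 (Finset.mem_erase.mpr ⟨by omega, h⟩)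
        · have ht : t ≠ 0 := by omega
          obtain ⟨hi, hsb, hch, h2, h3, hstar⟩ := destructS ht hmc hsub hc
          by_cases hie : i + 2 * t = s - 1
          · -- extend the chain by s-1
            refine ⟨i, t + 1, buildS (by omega) hi (by omega) ?_ ?_ ?_ ?_⟩
            · intro j hj
              rcases Nat.lt_or_ge j t with h | h
              · exact Finset.mem_of_mem_erase (hch j h)
              · have hjt : j = t := by omega
                subst hjt
                rw [hie]; exact hpm
            · exact fun h => h2 (Finset.mem_erase.mpr ⟨by omega, h⟩)
            · intro h
              have := Finset.mem_Icc.mp (hMs h); omega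
            · intro j hj
              rcases Nat.lt_or_ge j (t + 1) with h | h
              · exact Finset.mem_of_mem_erase (hstar j (by omega))
              · have hjt : j = t + 1 := by omega
                subst hjt
                have he : i - 1 + 2 * (t + 1) = s := by omega
                rw [he]; exact hsMs
          · refine ⟨i, t, buildS ht hi (by omega) ?_ ?_ ?_ ?_⟩
            · exact fun j hj => Finset.mem_of_mem_erase (hch j hj)
            · exact fun h => h2 (Finset.mem_erase.mpr ⟨by omega, h⟩)
            · exact fun h => h3 (Finset.mem_erase.mpr ⟨by omega, h⟩)
            · exact fun j hj => Finset.mem_of_mem_erase (hstar j hj)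
      · -- empty chain at s
        refine ⟨s, 0, build0 (by omega) le_rfl hpm hsM ?_ hsMs⟩
        intro h
        have := Finset.mem_Icc.mp (hMs h); omega
    · -- s ∉ M, s ∉ Mstar : shrink to s-1
      have hM'sub : M ⊆ Finset.Icc 1 (s - 1) := by
        intro x hx
        have hx2 := Finset.mem_Icc.mp (hMs hx)
        have hx1 : x ≠ s := fun h => hsM (h ▸ hx)
        rw [Finset.mem_Icc]; omega
      have hMstar'sub : Mstar ⊆ Finset.Icc 1 (s - 1) := by
        intro x hx
        have hx2 := Finset.mem_Icc.mp (hMstars hx)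
        have hx1 : x ≠ s := fun h => hsMs (h ▸ hx)
        rw [Finset.mem_Icc]; omega
      obtain ⟨i, t, hmc, hsub, hc⟩ :=
        IH (s - 1) (by omega) M Mstar ⟨hM'sub, hM.2⟩ ⟨hMstar'sub, hMstar.2⟩ hcard
      rcases Nat.eq_zero_or_pos t with rfl | ht0
      · obtain ⟨h1, h2, h3, h4, h5, h6⟩ := destruct0 hmc hsub
        exact ⟨i, 0, build0 h1 (by omega) h3 h4 h5 h6⟩
      · have ht : t ≠ 0 := by omega
        obtain ⟨hi, hsb, hch, h2, h3, hstar⟩ := destructS ht hmc hsub hc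
        exact ⟨i, t, buildS ht hi (by omega) hch h2 h3 hstar⟩


/-- If `M` and `M*` are matchings with `|M*| = |M| + 1`, then there is a maximal chain
`C` of `M` (possibly an empty chain) with `Aug(C) ⊆ M*` and `|Aug(C)| = |C| + 1`. -/
theorem stmt_5 (s : ℕ) (M Mstar : Finset ℕ) (hM : IsMatching s M)
    (hMstar : IsMatching s Mstar) (hcard : Mstar.card = M.card + 1) :
    ∃ i t, IsMaximalChain s M i t ∧ augSet s i t ⊆ Mstar ∧
      (augSet s i t).card = (chainSet i t).card + 1 := by
  exact key s M Mstar hM hMstar (by omega)
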